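/- arXiv:2204.04780 — 8 statements merged into one kernel-verified Lean document; each statement's English description precedes it below -/
import Mathlib

section
/- Let S be a finite type, h a natural number, P : ℕ → S → S → ℝ a time-dependent transition kernel with P k s s' ≥ 0 and ∑_{s'} P k s s' = 1 for every k < h and s ∈ S, and u : ℕ → S → ℝ a nonnegative per-step utility. Define the value function v : ℕ → S → ℝ by v h s = 0 and, for k < h, v k s = u k s + ∑_{s' ∈ S} P k s s' · v (k+1) s'. Then for every initial state s₀, the value v 0 s₀ equals the expected cumulative utility over trajectories: v 0 s₀ = ∑_{τ : Fin (h+1) → S, τ 0 = s₀} (∏_{k=0}^{h-1} P k (τ k) (τ (k+1))) · (∑_{k=0}^{h-1} u k (τ k)). -/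
/-!
Induction on the horizon. Splitting a trajectory from `s` into its first step `s → s'` and a
trajectory from `s'` of the time-shifted process, the path weights factor as
`P 0 s s' * weight'` and the cumulative utility as `u 0 s + utility'`. Since the weights of the
trajectories from `s'` sum to `1`, summing over them turns the expected cumulative utility into
`u 0 s + ∑ s', P 0 s s' * v 1 s'`, which is the Bellman recursion.
-/

open Finset

namespace Trajectory

variable {S : Type*}

def weight {n : ℕ} (P : ℕ → S → S → ℝ) (τ : Fin (n + 1) → S) : ℝ :=
  ∏ k : Fin n, P k (τ k.castSucc) (τ k.succ)

def utility {n : ℕ} (u : ℕ → S → ℝ) (τ : Fin (n + 1) → S) : ℝ :=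
  ∑ k : Fin n, u k (τ k.castSucc)

theorem weight_cons {n : ℕ} (P : ℕ → S → S → ℝ) (s : S) (σ : Fin (n + 1) → S) :
    weight P (Fin.cons s σ : Fin (n + 2) → S) = P 0 s (σ 0) * weight (fun k => P (k + 1)) σ := by
  simp [weight, Fin.prod_univ_succ]

theorem utility_cons {n : ℕ} (u : ℕ → S → ℝ) (s : S) (σ : Fin (n + 1) → S) :
    utility u (Fin.cons s σ : Fin (n + 2) → S) = u 0 s + utility (fun k => u (k + 1)) σ := by
  simp [utility, Fin.sum_univ_succ]

theorem sum_filter_apply_zero_eq_sum_cons [Fintype S] [DecidableEq S] {M : Type*}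
    [AddCommMonoid M] {n : ℕ} (s : S) (f : (Fin (n + 1) → S) → M) :
    ∑ τ ∈ univ.filter (fun τ : Fin (n + 1) → S => τ 0 = s), f τ
      = ∑ σ : Fin n → S, f (Fin.cons s σ) :=
  sum_nbij' Fin.tail (fun σ => Fin.cons s σ) (by simp) (by simp)
    (fun τ hτ => by rw [← (mem_filter.mp hτ).2, Fin.cons_self_tail])
    (fun σ _ => by simp)
    (fun τ hτ => by rw [← (mem_filter.mp hτ).2, Fin.cons_self_tail])

theorem sum_filter_apply_zero_succ [Fintype S] [DecidableEq S] {M : Type*} [AddCommMonoid M]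
    {n : ℕ} (s : S) (f : (Fin (n + 2) → S) → M) :
    ∑ τ ∈ univ.filter (fun τ : Fin (n + 2) → S => τ 0 = s), f τ
      = ∑ s', ∑ σ ∈ univ.filter (fun σ : Fin (n + 1) → S => σ 0 = s'), f (Fin.cons s σ) := by
  rw [sum_filter_apply_zero_eq_sum_cons, sum_fiberwise]

theorem sum_weight_eq_one [Fintype S] [DecidableEq S] {n : ℕ} {P : ℕ → S → S → ℝ}
    (hP : ∀ k < n, ∀ s, ∑ s', P k s s' = 1) (s : S) :
    ∑ τ ∈ univ.filter (fun τ : Fin (n + 1) → S => τ 0 = s), weight P τ = 1 := by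
  induction n generalizing P s with
  | zero => rw [sum_filter_apply_zero_eq_sum_cons]; simp [weight]
  | succ n ih =>
    have ih' := ih (P := fun k => P (k + 1)) (fun k hk => hP (k + 1) (by omega))
    calc _ = ∑ s', P 0 s s' *
          ∑ σ ∈ univ.filter (fun σ : Fin (n + 1) → S => σ 0 = s'),
            weight (fun k => P (k + 1)) σ := by
          rw [sum_filter_apply_zero_succ]
          refine sum_congr rfl fun s' _ => ?_
          rw [mul_sum]
          exact sum_congr rfl fun σ hσ => by rw [weight_cons, (mem_filter.mp hσ).2]
      _ = 1 := by simp only [ih', mul_one, hP 0 n.succ_pos]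

theorem bellman_eq_sum_weight_mul_utility [Fintype S] [DecidableEq S] {n : ℕ}
    {P : ℕ → S → S → ℝ} {u v : ℕ → S → ℝ}
    (hP : ∀ k < n, ∀ s, ∑ s', P k s s' = 1) (hv_n : ∀ s, v n s = 0)
    (hv : ∀ k < n, ∀ s, v k s = u k s + ∑ s', P k s s' * v (k + 1) s') (s : S) :
    v 0 s = ∑ τ ∈ univ.filter (fun τ : Fin (n + 1) → S => τ 0 = s),
      weight P τ * utility u τ := by
  induction n generalizing P u v s with
  | zero => rw [sum_filter_apply_zero_eq_sum_cons]; simp [utility, hv_n]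
  | succ n ih =>
    set P' : ℕ → S → S → ℝ := fun k => P (k + 1)
    have hP' : ∀ k < n, ∀ s, ∑ s', P' k s s' = 1 := fun k hk => hP (k + 1) (by omega)
    have ih' := ih (u := fun k => u (k + 1)) (v := fun k => v (k + 1)) hP' hv_n
      (fun k hk => hv (k + 1) (by omega))
    calc v 0 s = ∑ s', P 0 s s' * (u 0 s + v 1 s') := by
          simp only [hv 0 n.succ_pos, mul_add, sum_add_distrib, ← sum_mul, hP 0 n.succ_pos,
            one_mul]
      _ = ∑ s', P 0 s s' * (u 0 s * ∑ σ ∈ univ.filter (fun σ : Fin (n + 1) → S => σ 0 = s'),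
            weight P' σ + ∑ σ ∈ univ.filter (fun σ : Fin (n + 1) → S => σ 0 = s'),
            weight P' σ * utility (fun k => u (k + 1)) σ) := by
          simp only [sum_weight_eq_one hP', mul_one, ih']
      _ = _ := by
          rw [sum_filter_apply_zero_succ]
          refine sum_congr rfl fun s' _ => ?_
          rw [mul_sum, ← sum_add_distrib, mul_sum]
          refine sum_congr rfl fun σ hσ => ?_
          rw [weight_cons, utility_cons, (mem_filter.mp hσ).2]
          ring

end Trajectory

theorem value_eq_expected_cumulative_utility_general
    (S : Type*) [Fintype S] [DecidableEq S] (h : ℕ)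
    (P : ℕ → S → S → ℝ) (u : ℕ → S → ℝ)
    (hP_sum : ∀ k < h, ∀ s : S, ∑ s' : S, P k s s' = 1)
    (v : ℕ → S → ℝ)
    (hv_h : ∀ s : S, v h s = 0)
    (hv : ∀ k < h, ∀ s : S, v k s = u k s + ∑ s' : S, P k s s' * v (k + 1) s')
    (s₀ : S) :
    v 0 s₀ =
      ∑ τ ∈ Finset.univ.filter (fun τ : Fin (h + 1) → S => τ 0 = s₀),
        (∏ k : Fin h, P k.val (τ k.castSucc) (τ k.succ)) *
          (∑ k : Fin h, u k.val (τ k.castSucc)) :=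
  Trajectory.bellman_eq_sum_weight_mul_utility hP_sum hv_h hv s₀

/-- the Bellman value function of a finite-horizon MDP (under a fixed
policy, inducing time-dependent kernel `P` and per-step utility `u`) equals the
expected cumulative utility over trajectories. -/
theorem value_eq_expected_cumulative_utility
    (S : Type*) [Fintype S] [DecidableEq S] (h : ℕ)
    (P : ℕ → S → S → ℝ) (u : ℕ → S → ℝ)
    (hP_nonneg : ∀ k < h, ∀ s s' : S, 0 ≤ P k s s')
    (hP_sum : ∀ k < h, ∀ s : S, ∑ s' : S, P k s s' = 1)
    (hu_nonneg : ∀ k < h, ∀ s : S, 0 ≤ u k s)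
    (v : ℕ → S → ℝ)
    (hv_h : ∀ s : S, v h s = 0)
    (hv : ∀ k < h, ∀ s : S, v k s = u k s + ∑ s' : S, P k s s' * v (k + 1) s')
    (s₀ : S) :
    v 0 s₀ =
      ∑ τ ∈ Finset.univ.filter (fun τ : Fin (h + 1) → S => τ 0 = s₀),
        (∏ k : Fin h, P k.val (τ k.castSucc) (τ k.succ)) *
          (∑ k : Fin h, u k.val (τ k.castSucc)) :=
  value_eq_expected_cumulative_utility_general S h P u hP_sum v hv_h hv s₀
end

section
/- Let S be a finite type, h a natural number, P : ℕ → S → S → ℝ a time-dependent transition kernel with P k s s' ≥ 0 and ∑_{s'} P k s s' = 1 for every k < h and s ∈ S, and B ⊆ S a set of risky states. Define the execution risk ER : ℕ → S → ℝ by ER h s = 1 if s ∈ B and 0 otherwise, and for k < h, ER k s = 1 if s ∈ B, and ER k s = ∑_{s' ∈ S} P k s s' · ER (k+1) s' if s ∉ B. Then for every s₀ ∈ S, 1 − ER 0 s₀ = ∑_{τ : Fin (h+1) → S, τ 0 = s₀, τ k ∉ B for all k ≤ h} ∏_{k=0}^{h-1} P k (τ k) (τ (k+1)); i.e., ER 0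 s₀ is exactly the probability that a run of the Markov chain started at s₀ visits a risky state at some time step k ≤ h. -/
/-!
Both `1 - ER k s` and the total weight of the risk-free paths of length `h - k` from `s` satisfy
the same backward recursion: they vanish on `B`, and off `B` they are the `P k s`-average of
their values one step later (for `1 - ER` because `P k s` sums to one). For path weights this
comes from splitting a path into its first state and its tail.
-/

open Finset

section PathWeights

variable {S R : Type*} [CommSemiring R]

theorem Fin.sum_fin_succ_pi [Fintype S] {n : ℕ} (f : (Fin (n + 1) → S) → R) :
    ∑ τ, f τ = ∑ x, ∑ τ, f (Fin.cons x τ) := by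
  rw [← (Fin.consEquiv fun _ => S).sum_comp, Fintype.sum_prod_type]
  rfl

def pathWeight (P : ℕ → S → S → R) (j : ℕ) {n : ℕ} (τ : Fin (n + 1) → S) : R :=
  ∏ k : Fin n, P (j + k) (τ k.castSucc) (τ k.succ)

theorem pathWeight_cons (P : ℕ → S → S → R) (j : ℕ) {n : ℕ} (x : S) (τ : Fin (n + 1) → S) :
    pathWeight P j (Fin.cons x τ : Fin (n + 2) → S) = P j x (τ 0) * pathWeight P (j + 1) τ := by
  simp only [pathWeight, Fin.prod_univ_succ, Fin.castSucc_zero, Fin.cons_zero, Fin.val_zero,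
    add_zero, Fin.val_succ, Fin.cons_succ, ← Fin.succ_castSucc, add_assoc, add_comm 1]

variable [Fintype S] [DecidableEq S]

def safePathWeight (P : ℕ → S → S → R) (B : Finset S) (j n : ℕ) (s : S) : R :=
  ∑ τ ∈ univ.filter (fun τ : Fin (n + 1) → S => τ 0 = s ∧ ∀ k, τ k ∉ B), pathWeight P j τ

theorem safePathWeight_zero (P : ℕ → S → S → R) (B : Finset S) (j : ℕ) (s : S) :
    safePathWeight P B j 0 s = if s ∈ B then 0 else 1 := by
  rw [safePathWeight, sum_filter, ← (Equiv.funUnique (Fin 1) S).symm.sum_comp]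
  simp [pathWeight, ite_and, sum_ite_eq']

theorem safePathWeight_succ (P : ℕ → S → S → R) (B : Finset S) (j n : ℕ) (s : S) :
    safePathWeight P B j (n + 1) s =
      if s ∈ B then 0 else ∑ s', P j s s' * safePathWeight P B (j + 1) n s' := by
  have hsafe : ∀ x (τ : Fin (n + 1) → S),
      (∀ k, (Fin.cons x τ : Fin (n + 2) → S) k ∉ B) ↔ x ∉ B ∧ ∀ k, τ k ∉ B := fun x τ => by
    simp [Fin.forall_fin_succ]
  rw [safePathWeight, sum_filter, Fin.sum_fin_succ_pi, sum_comm]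
  simp only [Fin.cons_zero, pathWeight_cons, hsafe, ite_and, sum_ite_eq', mem_univ, if_true]
  split_ifs
  · simp
  · simp only [safePathWeight, mul_sum, sum_filter, mul_ite, mul_zero]
    rw [sum_comm]
    simp only [ite_and, sum_ite_eq, mem_univ, if_true]

end PathWeights

theorem one_sub_eq_safePathWeight {S R : Type*} [Fintype S] [DecidableEq S] [CommRing R]
    {h : ℕ} {P : ℕ → S → S → R} {B : Finset S}
    (hP_sum : ∀ k < h, ∀ s, ∑ s', P k s s' = 1) {ER : ℕ → S → R}
    (hER_h : ∀ s, ER h s = if s ∈ B then 1 else 0)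
    (hER : ∀ k < h, ∀ s, ER k s = if s ∈ B then 1 else ∑ s', P k s s' * ER (k + 1) s')
    {j n : ℕ} (hjn : j + n = h) (s : S) :
    1 - ER j s = safePathWeight P B j n s := by
  induction n generalizing j s with
  | zero =>
    obtain rfl : j = h := hjn
    rw [hER_h, safePathWeight_zero]
    split_ifs <;> simp
  | succ n ih =>
    have hj : j < h := by omega
    rw [hER j hj, safePathWeight_succ]
    split_ifs
    · simp
    · calc 1 - ∑ s', P j s s' * ER (j + 1) s' = ∑ s', P j s s' * (1 - ER (j + 1) s') := by
            simp only [mul_sub, mul_one, sum_sub_distrib, hP_sum j hj s]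
        _ = ∑ s', P j s s' * safePathWeight P B (j + 1) n s' := by
          simp only [ih (by omega : j + 1 + n = h)]

theorem execution_risk_eq_prob_visit_risky_general
    (S : Type*) [Fintype S] [DecidableEq S] (h : ℕ)
    (P : ℕ → S → S → ℝ) (B : Finset S)
    (hP_sum : ∀ k < h, ∀ s : S, ∑ s' : S, P k s s' = 1)
    (ER : ℕ → S → ℝ)
    (hER_h : ∀ s : S, ER h s = if s ∈ B then 1 else 0)
    (hER : ∀ k < h, ∀ s : S,
      ER k s = if s ∈ B then 1 else ∑ s' : S, P k s s' * ER (k + 1) s')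
    (s₀ : S) :
    1 - ER 0 s₀ =
      ∑ τ ∈ Finset.univ.filter
          (fun τ : Fin (h + 1) → S => τ 0 = s₀ ∧ ∀ k : Fin (h + 1), τ k ∉ B),
        ∏ k : Fin h, P k.val (τ k.castSucc) (τ k.succ) := by
  simpa [safePathWeight, pathWeight] using
    one_sub_eq_safePathWeight hP_sum hER_h hER (zero_add h) s₀

/-- with a deterministic risky set `B`, the execution-risk recursion
computes exactly the probability that a run of the Markov chain started at `s₀`
visits a risky state at some time step `k ≤ h`. -/
theorem execution_risk_eq_prob_visit_risky
    (S : Type*) [Fintype S] [DecidableEq S] (h : ℕ)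
    (P : ℕ → S → S → ℝ) (B : Finset S)
    (hP_nonneg : ∀ k < h, ∀ s s' : S, 0 ≤ P k s s')
    (hP_sum : ∀ k < h, ∀ s : S, ∑ s' : S, P k s s' = 1)
    (ER : ℕ → S → ℝ)
    (hER_h : ∀ s : S, ER h s = if s ∈ B then 1 else 0)
    (hER : ∀ k < h, ∀ s : S,
      ER k s = if s ∈ B then 1 else ∑ s' : S, P k s s' * ER (k + 1) s')
    (s₀ : S) :
    1 - ER 0 s₀ =
      ∑ τ ∈ Finset.univ.filter
          (fun τ : Fin (h + 1) → S => τ 0 = s₀ ∧ ∀ k : Fin (h + 1), τ k ∉ B),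
        ∏ k : Fin h, P k.val (τ k.castSucc) (τ k.succ) :=
  execution_risk_eq_prob_visit_risky_general S h P B hP_sum ER hER_h hER s₀
end

section
/- Let S be a finite type, h a natural number, P : ℕ → S → S → ℝ a time-dependent transition kernel with P k s s' ≥ 0 and ∑_{s'} P k s s' = 1 for every k < h and s ∈ S, and r : S → ℝ with 0 ≤ r s ≤ 1 (the probability of failure at each state, failures occurring independently at each visited state). Define ER : ℕ → S → ℝ by ER h s = r s, and for k < h, ER k s = r s + (1 − r s) · ∑_{s' ∈ S} P k s s' · ER (k+1) s'. Then for every s₀ ∈ S, 1 − ER 0 s₀ = ∑_{τ : Fin (h+1) → S, τ 0 = s₀} (∏_{k=0}^{h-1} P k (τ k) (τ (k+1))) · (∏_{k=0}^{h} (1 − r (τ k))); i.e., the recursion computes the probability of at least one failure along the run when each visited state s contributes an independent failure with probability r s. -/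
/-!
Write `1 - ER k s` for the probability of surviving from state `s` at time `k` to the horizon.
The recursion says: survive at `s`, then survive from the next state, averaged over the first
transition. Splitting the sum over surviving trajectories by their second state gives the same
one-step decomposition, so both sides agree by induction on the remaining horizon.
-/

open Finset

theorem Fin.sum_filter_zero_eq_sum_cons {α β : Type*} [Fintype α] [DecidableEq α]
    [AddCommMonoid β] {m : ℕ} (a : α) (F : (Fin (m + 1) → α) → β) :
    ∑ τ ∈ univ.filter (fun τ : Fin (m + 1) → α => τ 0 = a), F τ =
      ∑ g : Fin m → α, F (Fin.cons a g) := by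
  refine sum_nbij' Fin.tail (fun g => Fin.cons a g) (by simp) (by simp) ?_ (by simp) ?_ <;>
  · intro τ hτ
    rw [← (mem_filter.1 hτ).2, Fin.cons_self_tail]

section ExecutionRisk

variable {S : Type*} (P : ℕ → S → S → ℝ) (r : S → ℝ)

noncomputable def pathSurvivalProb (k : ℕ) {m : ℕ} (τ : Fin (m + 1) → S) : ℝ :=
  (∏ j : Fin m, P (k + j) (τ j.castSucc) (τ j.succ)) * ∏ j, (1 - r (τ j))

theorem pathSurvivalProb_cons (k : ℕ) {m : ℕ} (s : S) (g : Fin (m + 1) → S) :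
    pathSurvivalProb P r k (Fin.cons s g : Fin (m + 2) → S) =
      (1 - r s) * P k s (g 0) * pathSurvivalProb P r (k + 1) g := by
  simp only [pathSurvivalProb, Fin.prod_univ_succ (n := m), Fin.prod_univ_succ (n := m + 1),
    Fin.cons_zero, Fin.cons_succ, Fin.castSucc_zero, ← Fin.succ_castSucc, Fin.val_succ,
    Fin.val_zero, add_zero, add_assoc, add_comm 1]
  ring

variable [Fintype S] [DecidableEq S]

theorem sum_pathSurvivalProb_succ (k m : ℕ) (s : S) :
    ∑ τ ∈ univ.filter (fun τ : Fin (m + 2) → S => τ 0 = s), pathSurvivalProb P r k τ =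
      (1 - r s) * ∑ s', P k s s' *
        ∑ τ ∈ univ.filter (fun τ : Fin (m + 1) → S => τ 0 = s'),
          pathSurvivalProb P r (k + 1) τ := by
  rw [Fin.sum_filter_zero_eq_sum_cons]
  simp_rw [pathSurvivalProb_cons, mul_assoc, ← mul_sum]
  congr 1
  rw [← sum_fiberwise univ (fun g : Fin (m + 1) → S => g 0)]
  refine sum_congr rfl fun s' _ => ?_
  rw [mul_sum]
  exact sum_congr rfl fun g hg => by rw [(mem_filter.1 hg).2]

theorem one_sub_add_one_sub_mul_sum {ι : Type*} (s : Finset ι) (p E : ι → ℝ)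
    (hp : ∑ i ∈ s, p i = 1) (ρ : ℝ) :
    1 - (ρ + (1 - ρ) * ∑ i ∈ s, p i * E i) = (1 - ρ) * ∑ i ∈ s, p i * (1 - E i) := by
  simp only [mul_one_sub, sum_sub_distrib, hp]
  ring

theorem one_sub_eq_sum_pathSurvivalProb_of_recursion {h : ℕ}
    (hP_sum : ∀ k < h, ∀ s : S, ∑ s' : S, P k s s' = 1) {ER : ℕ → S → ℝ}
    (hER_h : ∀ s : S, ER h s = r s)
    (hER : ∀ k < h, ∀ s : S, ER k s = r s + (1 - r s) * ∑ s' : S, P k s s' * ER (k + 1) s')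
    (m k : ℕ) (hkm : k + m = h) (s : S) :
    1 - ER k s =
      ∑ τ ∈ univ.filter (fun τ : Fin (m + 1) → S => τ 0 = s), pathSurvivalProb P r k τ := by
  induction m generalizing k s with
  | zero =>
    obtain rfl : k = h := hkm
    rw [Fin.sum_filter_zero_eq_sum_cons, Fintype.sum_unique, hER_h]
    simp [pathSurvivalProb]
  | succ m ih =>
    have hk : k < h := by omega
    rw [hER k hk s, one_sub_add_one_sub_mul_sum _ _ _ (hP_sum k hk s),
      sum_pathSurvivalProb_succ]
    simp_rw [ih (k + 1) (by omega)]

end ExecutionRisk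

theorem execution_risk_eq_prob_failure_general
    (S : Type*) [Fintype S] [DecidableEq S] (h : ℕ)
    (P : ℕ → S → S → ℝ) (r : S → ℝ)
    (hP_sum : ∀ k < h, ∀ s : S, ∑ s' : S, P k s s' = 1)
    (ER : ℕ → S → ℝ)
    (hER_h : ∀ s : S, ER h s = r s)
    (hER : ∀ k < h, ∀ s : S,
      ER k s = r s + (1 - r s) * ∑ s' : S, P k s s' * ER (k + 1) s')
    (s₀ : S) :
    1 - ER 0 s₀ =
      ∑ τ ∈ Finset.univ.filter (fun τ : Fin (h + 1) → S => τ 0 = s₀),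
        (∏ k : Fin h, P k.val (τ k.castSucc) (τ k.succ)) *
          (∏ k : Fin (h + 1), (1 - r (τ k))) := by
  simpa only [pathSurvivalProb, zero_add] using
    one_sub_eq_sum_pathSurvivalProb_of_recursion P r hP_sum hER_h hER h 0 (zero_add h) s₀

/-- the execution-risk recursion (Lemma 1 of the paper) computes the
probability of at least one failure along the run, when each visited state `s`
contributes an independent failure with probability `r s`. -/
theorem execution_risk_eq_prob_failure
    (S : Type*) [Fintype S] [DecidableEq S] (h : ℕ)
    (P : ℕ → S → S → ℝ) (r : S → ℝ)
    (hP_nonneg : ∀ k < h, ∀ s s' : S, 0 ≤ P k s s')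
    (hP_sum : ∀ k < h, ∀ s : S, ∑ s' : S, P k s s' = 1)
    (hr : ∀ s : S, 0 ≤ r s ∧ r s ≤ 1)
    (ER : ℕ → S → ℝ)
    (hER_h : ∀ s : S, ER h s = r s)
    (hER : ∀ k < h, ∀ s : S,
      ER k s = r s + (1 - r s) * ∑ s' : S, P k s s' * ER (k + 1) s')
    (s₀ : S) :
    1 - ER 0 s₀ =
      ∑ τ ∈ Finset.univ.filter (fun τ : Fin (h + 1) → S => τ 0 = s₀),
        (∏ k : Fin h, P k.val (τ k.castSucc) (τ k.succ)) *
          (∏ k : Fin (h + 1), (1 - r (τ k))) :=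
  execution_risk_eq_prob_failure_general S h P r hP_sum ER hER_h hER s₀
end

section
/- Let S be a finite type, h a natural number, P : ℕ → S → S → ℝ with P k s s' ≥ 0 and ∑_{s'} P k s s' = 1 for every k < h and s ∈ S, u : ℕ → S → ℝ nonnegative, and L : ℕ → ℝ with L k > 0 for all k < h. Define v : ℕ → S → ℝ by v h s = 0 and v k s = u k s + ∑_{s'} P k s s' · v (k+1) s', and define the discretized value function v̄ : ℕ → S → ℝ by v̄ h s = 0 and v̄ k s = ⌊(u k s + ∑_{s'} P k s s' · v̄ (k+1) s') / L k⌋ · L k for k < h. Then for every k ≤ h and s ∈ S, v̄ k s ≥ v k s − ∑_{k'=k}^{h-1} L k'. -/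
/-! Backward induction on `k`: each rounding step loses less than `L k`, and averaging a pointwise
loss of at most `c` against a probability vector again loses at most `c`. -/

theorem Int.sub_le_floor_div_mul {K : Type*} [Field K] [LinearOrder K] [IsStrictOrderedRing K]
    [FloorRing K] {L : K} (hL : 0 < L) (x : K) : x - L ≤ ⌊x / L⌋ * L :=
  calc x - L = (x / L - 1) * L := by field_simp
    _ ≤ ⌊x / L⌋ * L := mul_le_mul_of_nonneg_right (Int.sub_one_lt_floor _).le hL.le

theorem Finset.sum_mul_sub_le_sum_mul_of_sum_eq_one {ι R : Type*} [CommRing R] [PartialOrder R]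
    [IsOrderedRing R] (s : Finset ι) {p f g : ι → R} {c : R} (hp : ∀ i ∈ s, 0 ≤ p i)
    (hp_sum : ∑ i ∈ s, p i = 1) (hfg : ∀ i ∈ s, g i - c ≤ f i) :
    ∑ i ∈ s, p i * g i - c ≤ ∑ i ∈ s, p i * f i :=
  calc ∑ i ∈ s, p i * g i - c = ∑ i ∈ s, p i * (g i - c) := by
        rw [Finset.sum_congr rfl fun i _ => mul_sub (p i) (g i) c, Finset.sum_sub_distrib,
          ← Finset.sum_mul, hp_sum, one_mul]
    _ ≤ ∑ i ∈ s, p i * f i :=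
        Finset.sum_le_sum fun i hi => mul_le_mul_of_nonneg_left (hfg i hi) (hp i hi)

theorem discretized_value_lower_bound_general
    (S : Type*) [Fintype S] (h : ℕ)
    (P : ℕ → S → S → ℝ) (u : ℕ → S → ℝ) (L : ℕ → ℝ)
    (hP_nonneg : ∀ k < h, ∀ s s' : S, 0 ≤ P k s s')
    (hP_sum : ∀ k < h, ∀ s : S, ∑ s' : S, P k s s' = 1)
    (hL : ∀ k < h, 0 < L k)
    (v : ℕ → S → ℝ)
    (hv_h : ∀ s : S, v h s = 0)
    (hv : ∀ k < h, ∀ s : S, v k s = u k s + ∑ s' : S, P k s s' * v (k + 1) s')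
    (vbar : ℕ → S → ℝ)
    (hvbar_h : ∀ s : S, vbar h s = 0)
    (hvbar : ∀ k < h, ∀ s : S,
      vbar k s =
        (⌊(u k s + ∑ s' : S, P k s s' * vbar (k + 1) s') / L k⌋ : ℝ) * L k) :
    ∀ k ≤ h, ∀ s : S, vbar k s ≥ v k s - ∑ k' ∈ Finset.Ico k h, L k' := by
  intro k hk
  induction hk using Nat.decreasingInduction with
  | self => simp [hv_h, hvbar_h]
  | of_succ k hkh ih =>
    intro s
    have hexpect := Finset.univ.sum_mul_sub_le_sum_mul_of_sum_eq_one
      (fun s' _ => hP_nonneg k hkh s s') (hP_sum k hkh s) (fun s' _ => ih s')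
    have hround := Int.sub_le_floor_div_mul (hL k hkh)
      (u k s + ∑ s' : S, P k s s' * vbar (k + 1) s')
    rw [Finset.sum_eq_sum_Ico_succ_bot hkh, hvbar k hkh s, hv k hkh s]
    linarith

/-- Lemma 3, lem:dis: the floor-discretized value function loses at
most `∑_{k'=k}^{h-1} L k'` compared with the true value function. -/
theorem discretized_value_lower_bound
    (S : Type*) [Fintype S] (h : ℕ)
    (P : ℕ → S → S → ℝ) (u : ℕ → S → ℝ) (L : ℕ → ℝ)
    (hP_nonneg : ∀ k < h, ∀ s s' : S, 0 ≤ P k s s')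
    (hP_sum : ∀ k < h, ∀ s : S, ∑ s' : S, P k s s' = 1)
    (hu_nonneg : ∀ k < h, ∀ s : S, 0 ≤ u k s)
    (hL : ∀ k < h, 0 < L k)
    (v : ℕ → S → ℝ)
    (hv_h : ∀ s : S, v h s = 0)
    (hv : ∀ k < h, ∀ s : S, v k s = u k s + ∑ s' : S, P k s s' * v (k + 1) s')
    (vbar : ℕ → S → ℝ)
    (hvbar_h : ∀ s : S, vbar h s = 0)
    (hvbar : ∀ k < h, ∀ s : S,
      vbar k s =
        (⌊(u k s + ∑ s' : S, P k s s' * vbar (k + 1) s') / L k⌋ : ℝ) * L k) :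
    ∀ k ≤ h, ∀ s : S, vbar k s ≥ v k s - ∑ k' ∈ Finset.Ico k h, L k' :=
  discretized_value_lower_bound_general S h P u L hP_nonneg hP_sum hL v hv_h hv vbar hvbar_h hvbar
end

section
/- Let S be a finite type, h a natural number, P : ℕ → S → S → ℝ with P k s s' ≥ 0 and ∑_{s'} P k s s' = 1 for every k < h and s ∈ S, u : ℕ → S → ℝ nonnegative, and L : ℕ → ℝ with L k > 0 for all k < h. Define v : ℕ → S → ℝ by v h s = 0 and v k s = u k s + ∑_{s'} P k s s' · v (k+1) s', and v̄ : ℕ → S → ℝ by v̄ h s = 0 and v̄ k s = ⌊(u k s + ∑_{s'} P k s s' · v̄ (k+1) s') / L k⌋ · L k for k < h. Then for every k ≤ h and s ∈ S, 0 ≤ v̄ k s ≤ v k s. -/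
/-! Backward induction on the stage `k`. The Bellman update `w ↦ u + P w` is monotone and
preserves nonnegativity because `P` and `u` are nonnegative, while rounding `x ≥ 0` down to a
multiple `⌊x / L⌋ * L` of `L > 0` stays in `[0, x]`. So if `0 ≤ v̄ (k+1) ≤ v (k+1)`, then
`0 ≤ v̄ k ≤ u k + P k v̄ (k+1) ≤ u k + P k v (k+1) = v k`. -/

open Finset

section Bellman

variable {S R : Type*} [Fintype S] [Semiring R] [PartialOrder R] [IsOrderedRing R]
  (P : S → S → R) (u : S → R)

def bellmanUpdate (w : S → R) (s : S) : R :=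
  u s + ∑ s', P s s' * w s'

variable {P u}

lemma bellmanUpdate_nonneg (hP : ∀ s s', 0 ≤ P s s') (hu : ∀ s, 0 ≤ u s) {w : S → R}
    (hw : ∀ s, 0 ≤ w s) (s : S) : 0 ≤ bellmanUpdate P u w s :=
  add_nonneg (hu s) (sum_nonneg fun s' _ => mul_nonneg (hP s s') (hw s'))

lemma bellmanUpdate_mono (hP : ∀ s s', 0 ≤ P s s') {w w' : S → R} (hw : ∀ s, w s ≤ w' s)
    (s : S) : bellmanUpdate P u w s ≤ bellmanUpdate P u w' s :=
  add_le_add_right (sum_le_sum fun s' _ => mul_le_mul_of_nonneg_left (hw s') (hP s s')) _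

end Bellman

section FloorMultiple

variable {α : Type*} [Field α] [LinearOrder α] [IsStrictOrderedRing α] [FloorRing α] {a b : α}

lemma floor_div_mul_nonneg (ha : 0 ≤ a) (hb : 0 ≤ b) : 0 ≤ (⌊a / b⌋ : α) * b :=
  mul_nonneg (Int.cast_nonneg (Int.floor_nonneg.mpr (div_nonneg ha hb))) hb

lemma floor_div_mul_le (hb : 0 < b) : (⌊a / b⌋ : α) * b ≤ a :=
  sub_nonneg.mp (Int.sub_floor_div_mul_nonneg a hb)

end FloorMultiple

theorem discretized_value_nonneg_and_le_general
    (S : Type*) [Fintype S] (h : ℕ)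
    (P : ℕ → S → S → ℝ) (u : ℕ → S → ℝ) (L : ℕ → ℝ)
    (hP_nonneg : ∀ k < h, ∀ s s' : S, 0 ≤ P k s s')
    (hu_nonneg : ∀ k < h, ∀ s : S, 0 ≤ u k s)
    (hL : ∀ k < h, 0 < L k)
    (v : ℕ → S → ℝ)
    (hv_h : ∀ s : S, v h s = 0)
    (hv : ∀ k < h, ∀ s : S, v k s = u k s + ∑ s' : S, P k s s' * v (k + 1) s')
    (vbar : ℕ → S → ℝ)
    (hvbar_h : ∀ s : S, vbar h s = 0)
    (hvbar : ∀ k < h, ∀ s : S,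
      vbar k s =
        (⌊(u k s + ∑ s' : S, P k s s' * vbar (k + 1) s') / L k⌋ : ℝ) * L k) :
    ∀ k ≤ h, ∀ s : S, 0 ≤ vbar k s ∧ vbar k s ≤ v k s := by
  intro k hk
  induction hk using Nat.decreasingInduction with
  | self => simp [hvbar_h, hv_h]
  | of_succ k hkh ih =>
    intro s
    have hupdate_nonneg : 0 ≤ bellmanUpdate (P k) (u k) (vbar (k + 1)) s :=
      bellmanUpdate_nonneg (hP_nonneg k hkh) (hu_nonneg k hkh) (fun s' => (ih s').1) s
    have hupdate_le : bellmanUpdate (P k) (u k) (vbar (k + 1)) s ≤ v k s :=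
      (hv k hkh s).symm ▸ bellmanUpdate_mono (hP_nonneg k hkh) (fun s' => (ih s').2) s
    rw [hvbar k hkh s]
    exact ⟨floor_div_mul_nonneg hupdate_nonneg (hL k hkh).le,
      (floor_div_mul_le (hL k hkh)).trans hupdate_le⟩

/-- the floor-discretized value function is nonnegative and never
exceeds the true value function. -/
theorem discretized_value_nonneg_and_le
    (S : Type*) [Fintype S] (h : ℕ)
    (P : ℕ → S → S → ℝ) (u : ℕ → S → ℝ) (L : ℕ → ℝ)
    (hP_nonneg : ∀ k < h, ∀ s s' : S, 0 ≤ P k s s')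
    (hP_sum : ∀ k < h, ∀ s : S, ∑ s' : S, P k s s' = 1)
    (hu_nonneg : ∀ k < h, ∀ s : S, 0 ≤ u k s)
    (hL : ∀ k < h, 0 < L k)
    (v : ℕ → S → ℝ)
    (hv_h : ∀ s : S, v h s = 0)
    (hv : ∀ k < h, ∀ s : S, v k s = u k s + ∑ s' : S, P k s s' * v (k + 1) s')
    (vbar : ℕ → S → ℝ)
    (hvbar_h : ∀ s : S, vbar h s = 0)
    (hvbar : ∀ k < h, ∀ s : S,
      vbar k s =
        (⌊(u k s + ∑ s' : S, P k s s' * vbar (k + 1) s') / L k⌋ : ℝ) * L k) :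
    ∀ k ≤ h, ∀ s : S, 0 ≤ vbar k s ∧ vbar k s ≤ v k s :=
  discretized_value_nonneg_and_le_general S h P u L hP_nonneg hu_nonneg hL v hv_h hv vbar hvbar_h
    hvbar
end

section
/- Let S be a finite type, h a natural number, P : ℕ → S → S → ℝ with P k s s' ≥ 0 and ∑_{s'} P k s s' = 1 for every k < h and s ∈ S, u : ℕ → S → ℝ nonnegative, U_max ∈ ℝ with 0 ≤ u k s ≤ U_max for all k < h, s ∈ S, and L : ℕ → ℝ with L k > 0 for all k < h. Define v̄ : ℕ → S → ℝ by v̄ h s = 0 and v̄ k s = ⌊(u k s + ∑_{s'} P k s s' · v̄ (k+1) s') / L k⌋ · L k for k < h. Then for every k < h and s ∈ S there exists a natural number m with v̄ k s = m · L k and m ≤ ⌊(h − k) · U_max / L k⌋; in particular v̄ k s belongs to the discrete set ℒ_k = {0, L k, 2 L k, …, ⌊(h−k)U_max/L k⌋ · L k}. -/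
/-! Induction backwards from the horizon shows `0 ≤ v̄ k s ≤ (h - k) U_max`: the Bellman
update adds at most `U_max` to a convex combination of values bounded by `(h - k - 1) U_max`,
and flooring to a multiple of `L k` only moves a nonnegative value down, never below `0`.
The multiplier of `L k` is then a natural number bounded by `⌊(h - k) U_max / L k⌋`. -/

open Finset

lemma floor_div_mul_mem_Icc {x L : ℝ} (hx : 0 ≤ x) (hL : 0 < L) :
    (⌊x / L⌋ : ℝ) * L ∈ Set.Icc 0 x :=
  ⟨mul_nonneg (Int.cast_nonneg (Int.floor_nonneg.2 (div_nonneg hx hL.le))) hL.le,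
    sub_nonneg.1 (Int.sub_floor_div_mul_nonneg x hL)⟩

lemma exists_nat_floor_div_mul_eq {x c L : ℝ} (hx : 0 ≤ x) (hxc : x ≤ c) (hL : 0 < L) :
    ∃ m : ℕ, (⌊x / L⌋ : ℝ) * L = m * L ∧ (m : ℤ) ≤ ⌊c / L⌋ := by
  have hxL : 0 ≤ x / L := div_nonneg hx hL.le
  refine ⟨⌊x / L⌋₊, by rw [natCast_floor_eq_intCast_floor hxL], ?_⟩
  rw [Int.natCast_floor_eq_floor hxL]
  exact Int.floor_le_floor (div_le_div_of_nonneg_right hxc hL.le)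

lemma add_sum_mul_mem_Icc {S : Type*} [Fintype S] {p v : S → ℝ} {a U c : ℝ}
    (hp : ∀ s, 0 ≤ p s) (hp_sum : ∑ s, p s = 1) (ha : a ∈ Set.Icc 0 U)
    (hv : ∀ s, v s ∈ Set.Icc 0 c) :
    a + ∑ s, p s * v s ∈ Set.Icc 0 (U + c) := by
  have hsum_le : ∑ s, p s * v s ≤ c :=
    calc ∑ s, p s * v s ≤ ∑ s, p s * c :=
          sum_le_sum fun s _ => mul_le_mul_of_nonneg_left (hv s).2 (hp s)
      _ = c := by rw [← sum_mul, hp_sum, one_mul]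
  have hsum_nonneg : 0 ≤ ∑ s, p s * v s :=
    sum_nonneg fun s _ => mul_nonneg (hp s) (hv s).1
  exact ⟨add_nonneg ha.1 hsum_nonneg, add_le_add ha.2 hsum_le⟩

section DiscretizedValue

variable {S : Type*} [Fintype S] {h : ℕ} {P : ℕ → S → S → ℝ} {u : ℕ → S → ℝ} {U_max : ℝ}
  {L : ℕ → ℝ} {vbar : ℕ → S → ℝ}

lemma bellman_target_mem_Icc
    (hP_nonneg : ∀ k < h, ∀ s s' : S, 0 ≤ P k s s')
    (hP_sum : ∀ k < h, ∀ s : S, ∑ s' : S, P k s s' = 1)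
    (hu : ∀ k < h, ∀ s : S, 0 ≤ u k s ∧ u k s ≤ U_max)
    {k : ℕ} (hk : k < h) (hnext : ∀ s, vbar (k + 1) s ∈ Set.Icc 0 ((h - (k + 1) : ℕ) * U_max))
    (s : S) :
    u k s + ∑ s' : S, P k s s' * vbar (k + 1) s' ∈ Set.Icc 0 ((h - k : ℕ) * U_max) := by
  have hsucc : ((h - k : ℕ) : ℝ) * U_max = U_max + (h - (k + 1) : ℕ) * U_max := by
    rw [show h - k = h - (k + 1) + 1 by omega]
    push_cast
    ring
  rw [hsucc]
  exact add_sum_mul_mem_Icc (hP_nonneg k hk s) (hP_sum k hk s) (hu k hk s) hnext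

lemma discretized_value_mem_Icc
    (hP_nonneg : ∀ k < h, ∀ s s' : S, 0 ≤ P k s s')
    (hP_sum : ∀ k < h, ∀ s : S, ∑ s' : S, P k s s' = 1)
    (hu : ∀ k < h, ∀ s : S, 0 ≤ u k s ∧ u k s ≤ U_max)
    (hL : ∀ k < h, 0 < L k)
    (hvbar_h : ∀ s : S, vbar h s = 0)
    (hvbar : ∀ k < h, ∀ s : S,
      vbar k s =
        (⌊(u k s + ∑ s' : S, P k s s' * vbar (k + 1) s') / L k⌋ : ℝ) * L k)
    {k : ℕ} (hk : k ≤ h) (s : S) :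
    vbar k s ∈ Set.Icc 0 ((h - k : ℕ) * U_max) := by
  induction hk using Nat.decreasingInduction generalizing s with
  | self => simp [hvbar_h]
  | of_succ k hk ih =>
    have htarget := bellman_target_mem_Icc hP_nonneg hP_sum hu hk ih s
    rw [hvbar k hk s]
    exact Set.Icc_subset_Icc_right htarget.2 (floor_div_mul_mem_Icc htarget.1 (hL k hk))

end DiscretizedValue

/-- every achievable floor-discretized value at time `k < h` is a
multiple `m * L k` with `m ≤ ⌊(h - k) * U_max / L k⌋`, i.e. it lies in the
discrete set `ℒ_k = {0, L k, 2 L k, …, ⌊(h-k)U_max/L k⌋ · L k}`. -/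
theorem discretized_value_mem_level_set
    (S : Type*) [Fintype S] (h : ℕ)
    (P : ℕ → S → S → ℝ) (u : ℕ → S → ℝ) (U_max : ℝ) (L : ℕ → ℝ)
    (hP_nonneg : ∀ k < h, ∀ s s' : S, 0 ≤ P k s s')
    (hP_sum : ∀ k < h, ∀ s : S, ∑ s' : S, P k s s' = 1)
    (hu : ∀ k < h, ∀ s : S, 0 ≤ u k s ∧ u k s ≤ U_max)
    (hL : ∀ k < h, 0 < L k)
    (vbar : ℕ → S → ℝ)
    (hvbar_h : ∀ s : S, vbar h s = 0)
    (hvbar : ∀ k < h, ∀ s : S,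
      vbar k s =
        (⌊(u k s + ∑ s' : S, P k s s' * vbar (k + 1) s') / L k⌋ : ℝ) * L k) :
    ∀ k < h, ∀ s : S, ∃ m : ℕ,
      vbar k s = (m : ℝ) * L k ∧ (m : ℤ) ≤ ⌊((h - k : ℕ) : ℝ) * U_max / L k⌋ := by
  intro k hk s
  have hnext := discretized_value_mem_Icc hP_nonneg hP_sum hu hL hvbar_h hvbar hk.nat_succ_le
  have htarget := bellman_target_mem_Icc hP_nonneg hP_sum hu hk hnext s
  rw [hvbar k hk s]
  exact exists_nat_floor_div_mul_eq htarget.1 htarget.2 (hL k hk)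
end

section
/- Let S be a finite type, h ≥ 1 a natural number, P : ℕ → S → S → ℝ with P k s s' ≥ 0 and ∑_{s'} P k s s' = 1 for every k < h and s ∈ S, u : ℕ → S → ℝ nonnegative with u k s ≤ U_max where U_max > 0, ε > 0, and L k = ε·U_max / ((h − k)·(Real.log h + 1)) for k < h. Let v, w : ℕ → S → ℝ be two value functions defined by the Bellman recursion v h s = w h s = 0, v k s = u₁ k s + ∑_{s'} P₁ k s s' · v (k+1) s' and w k s = u₂ k s + ∑_{s'} P₂ k s s' · w (k+1) s' (for two policies, i.e., two choices of kernel Pᵢ and utility uᵢ, each stochastic and with 0 ≤ uᵢ k s ≤ U_max), and let v̄, w̄ be the corresponding floor-discretized value functions with levels L k. If v̄ 0 s₀ ≥ w̄ 0 s₀ and w 0 s₀ ≥ U_max, then v 0 s₀ ≥ (1 − ε) · w 0 s₀. -/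
/-!
Both value functions are compared through the comparison principle for the backward Bellman
recursion with a nonnegative kernel: a subsolution lies below a supersolution. Rounding down
makes `vbar` a subsolution for policy 1, so `vbar ≤ v`; since each rounding loses less than
`L k` and the kernel is stochastic, `wbar` plus the tail sum `∑_{j ≥ k} L j` is a supersolution
for policy 2. The levels are chosen so that `∑_{k < h} L k = ε U_max H_h / (ln h + 1) ≤ ε U_max`
by the bound `H_h ≤ 1 + ln h` on harmonic numbers, and `ε U_max ≤ ε w 0 s₀`.
-/

open Finset

section Bellman

variable {S : Type*} [Fintype S] {h : ℕ} {P : ℕ → S → S → ℝ} {u : ℕ → S → ℝ}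

theorem bellman_comparison {f g : ℕ → S → ℝ} (hP : ∀ k < h, ∀ s s', 0 ≤ P k s s')
    (hg : ∀ k < h, ∀ s, g k s ≤ u k s + ∑ s', P k s s' * g (k + 1) s')
    (hf : ∀ k < h, ∀ s, u k s + ∑ s', P k s s' * f (k + 1) s' ≤ f k s)
    (hgf : ∀ s, g h s ≤ f h s) {k : ℕ} (hk : k ≤ h) (s : S) : g k s ≤ f k s := by
  induction hk using Nat.decreasingInduction generalizing s with
  | self => exact hgf s
  | of_succ k hk ih =>
    calc g k s ≤ u k s + ∑ s', P k s s' * g (k + 1) s' := hg k hk s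
      _ ≤ u k s + ∑ s', P k s s' * f (k + 1) s' := by
        gcongr with s'
        exacts [hP k hk s s', ih s']
      _ ≤ f k s := hf k hk s

theorem bellman_supersolution_add_tail {f : ℕ → S → ℝ} (L : ℕ → ℝ)
    (hP_sum : ∀ k < h, ∀ s, ∑ s', P k s s' = 1)
    (hf : ∀ k < h, ∀ s, u k s + ∑ s', P k s s' * f (k + 1) s' - L k ≤ f k s) :
    ∀ k < h, ∀ s, u k s + ∑ s', P k s s' * (f (k + 1) s' + ∑ j ∈ Ico (k + 1) h, L j)
      ≤ f k s + ∑ j ∈ Ico k h, L j := by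
  intro k hk s
  have hsum : ∑ s', P k s s' * (f (k + 1) s' + ∑ j ∈ Ico (k + 1) h, L j)
      = ∑ s', P k s s' * f (k + 1) s' + ∑ j ∈ Ico (k + 1) h, L j := by
    simp only [mul_add, sum_add_distrib, ← sum_mul, hP_sum k hk s, one_mul]
  rw [hsum, sum_eq_sum_Ico_succ_bot hk]
  linarith [hf k hk s]

end Bellman

theorem sum_range_inv_sub_eq_harmonic (h : ℕ) :
    ∑ k ∈ range h, ((h - k : ℕ) : ℝ)⁻¹ = harmonic h := by
  rw [← sum_range_reflect, harmonic]
  push_cast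
  refine sum_congr rfl fun k hk => ?_
  rw [show h - (h - 1 - k) = k + 1 by have := mem_range.mp hk; omega, Nat.cast_add_one]

theorem sum_range_div_sub_mul_log_add_one_le {c : ℝ} (hc : 0 ≤ c) (h : ℕ) :
    ∑ k ∈ range h, c / (((h - k : ℕ) : ℝ) * (Real.log h + 1)) ≤ c := by
  have hlog : 0 < Real.log h + 1 := by positivity
  calc ∑ k ∈ range h, c / (((h - k : ℕ) : ℝ) * (Real.log h + 1))
      = c / (Real.log h + 1) * harmonic h := by
        rw [← sum_range_inv_sub_eq_harmonic, mul_sum]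
        refine sum_congr rfl fun k _ => ?_
        field_simp
    _ ≤ c / (Real.log h + 1) * (Real.log h + 1) := by
        gcongr
        linarith [harmonic_le_one_add_log h]
    _ = c := div_mul_cancel₀ c hlog.ne'

theorem fptas_approximation_guarantee_general
    (S : Type*) [Fintype S] (h : ℕ)
    (U_max ε : ℝ) (hU : 0 < U_max) (hε : 0 < ε)
    (L : ℕ → ℝ)
    (hL : ∀ k < h, L k = ε * U_max / (((h - k : ℕ) : ℝ) * (Real.log h + 1)))
    (P₁ P₂ : ℕ → S → S → ℝ) (u₁ u₂ : ℕ → S → ℝ)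
    (hP₁_nonneg : ∀ k < h, ∀ s s' : S, 0 ≤ P₁ k s s')
    (hP₂_nonneg : ∀ k < h, ∀ s s' : S, 0 ≤ P₂ k s s')
    (hP₂_sum : ∀ k < h, ∀ s : S, ∑ s' : S, P₂ k s s' = 1)
    (v w vbar wbar : ℕ → S → ℝ)
    (hv_h : ∀ s : S, v h s = 0)
    (hv : ∀ k < h, ∀ s : S, v k s = u₁ k s + ∑ s' : S, P₁ k s s' * v (k + 1) s')
    (hw_h : ∀ s : S, w h s = 0)
    (hw : ∀ k < h, ∀ s : S, w k s = u₂ k s + ∑ s' : S, P₂ k s s' * w (k + 1) s')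
    (hvbar_h : ∀ s : S, vbar h s = 0)
    (hvbar : ∀ k < h, ∀ s : S,
      vbar k s =
        (⌊(u₁ k s + ∑ s' : S, P₁ k s s' * vbar (k + 1) s') / L k⌋ : ℝ) * L k)
    (hwbar_h : ∀ s : S, wbar h s = 0)
    (hwbar : ∀ k < h, ∀ s : S,
      wbar k s =
        (⌊(u₂ k s + ∑ s' : S, P₂ k s s' * wbar (k + 1) s') / L k⌋ : ℝ) * L k)
    (s₀ : S)
    (hdom : vbar 0 s₀ ≥ wbar 0 s₀)
    (hwU : w 0 s₀ ≥ U_max) :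
    v 0 s₀ ≥ (1 - ε) * w 0 s₀ := by
  have hL_pos : ∀ k < h, 0 < L k := fun k hk => by
    have : (0 : ℝ) < ((h - k : ℕ) : ℝ) := by exact_mod_cast Nat.sub_pos_of_lt hk
    rw [hL k hk]
    positivity
  have hvbar_le : vbar 0 s₀ ≤ v 0 s₀ :=
    bellman_comparison hP₁_nonneg
      (fun k hk s => by
        rw [hvbar k hk s]
        linarith [Int.sub_floor_div_mul_nonneg
          (u₁ k s + ∑ s', P₁ k s s' * vbar (k + 1) s') (hL_pos k hk)])
      (fun k hk s => (hv k hk s).ge) (fun s => by rw [hvbar_h, hv_h]) h.zero_le s₀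
  have hw_le : w 0 s₀ ≤ wbar 0 s₀ + ∑ j ∈ Ico 0 h, L j :=
    bellman_comparison (f := fun k s => wbar k s + ∑ j ∈ Ico k h, L j) hP₂_nonneg
      (fun k hk s => (hw k hk s).le)
      (bellman_supersolution_add_tail L hP₂_sum fun k hk s => by
        rw [hwbar k hk s]
        linarith [Int.sub_floor_div_mul_lt
          (u₂ k s + ∑ s', P₂ k s s' * wbar (k + 1) s') (hL_pos k hk)])
      (fun s => by simp [hw_h, hwbar_h]) h.zero_le s₀
  have hL_sum : ∑ j ∈ Ico 0 h, L j ≤ ε * U_max := by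
    rw [← range_eq_Ico, sum_congr rfl fun k hk => hL k (mem_range.mp hk)]
    exact sum_range_div_sub_mul_log_add_one_le (by positivity) h
  nlinarith [mul_le_mul_of_nonneg_left hwU hε.le]

/-- Corollary 1: with discretization levels
`L k = ε·U_max/((h−k)(ln h + 1))`, if the discretized value of policy 1 at `s₀`
dominates that of policy 2, and the true value of policy 2 is at least `U_max`,
then policy 1 is a `(1 − ε)`-approximation of policy 2. -/
theorem fptas_approximation_guarantee
    (S : Type*) [Fintype S] (h : ℕ) (hh : 1 ≤ h)
    (U_max ε : ℝ) (hU : 0 < U_max) (hε : 0 < ε)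
    (L : ℕ → ℝ)
    (hL : ∀ k < h, L k = ε * U_max / (((h - k : ℕ) : ℝ) * (Real.log h + 1)))
    (P₁ P₂ : ℕ → S → S → ℝ) (u₁ u₂ : ℕ → S → ℝ)
    (hP₁_nonneg : ∀ k < h, ∀ s s' : S, 0 ≤ P₁ k s s')
    (hP₁_sum : ∀ k < h, ∀ s : S, ∑ s' : S, P₁ k s s' = 1)
    (hP₂_nonneg : ∀ k < h, ∀ s s' : S, 0 ≤ P₂ k s s')
    (hP₂_sum : ∀ k < h, ∀ s : S, ∑ s' : S, P₂ k s s' = 1)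
    (hu₁ : ∀ k < h, ∀ s : S, 0 ≤ u₁ k s ∧ u₁ k s ≤ U_max)
    (hu₂ : ∀ k < h, ∀ s : S, 0 ≤ u₂ k s ∧ u₂ k s ≤ U_max)
    (v w vbar wbar : ℕ → S → ℝ)
    (hv_h : ∀ s : S, v h s = 0)
    (hv : ∀ k < h, ∀ s : S, v k s = u₁ k s + ∑ s' : S, P₁ k s s' * v (k + 1) s')
    (hw_h : ∀ s : S, w h s = 0)
    (hw : ∀ k < h, ∀ s : S, w k s = u₂ k s + ∑ s' : S, P₂ k s s' * w (k + 1) s')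
    (hvbar_h : ∀ s : S, vbar h s = 0)
    (hvbar : ∀ k < h, ∀ s : S,
      vbar k s =
        (⌊(u₁ k s + ∑ s' : S, P₁ k s s' * vbar (k + 1) s') / L k⌋ : ℝ) * L k)
    (hwbar_h : ∀ s : S, wbar h s = 0)
    (hwbar : ∀ k < h, ∀ s : S,
      wbar k s =
        (⌊(u₂ k s + ∑ s' : S, P₂ k s s' * wbar (k + 1) s') / L k⌋ : ℝ) * L k)
    (s₀ : S)
    (hdom : vbar 0 s₀ ≥ wbar 0 s₀)
    (hwU : w 0 s₀ ≥ U_max) :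
    v 0 s₀ ≥ (1 - ε) * w 0 s₀ :=
  fptas_approximation_guarantee_general S h U_max ε hU hε L hL P₁ P₂ u₁ u₂ hP₁_nonneg hP₂_nonneg
    hP₂_sum v w vbar wbar hv_h hv hw_h hw hvbar_h hvbar hwbar_h hwbar s₀ hdom hwU
end

section
/- Let S be a finite type, h ≥ 1 a natural number, U_max > 0, ε > 0, and L k = ε·U_max / (3·(h − k)·(Real.log h + 1)) for k < h. Let v, w : ℕ → S → ℝ be value functions of two policies given by the Bellman recursion (v h s = w h s = 0, v k s = u₁ k s + ∑_{s'} P₁ k s s' · v (k+1) s', and analogously for w, with each Pᵢ a stochastic kernel and 0 ≤ uᵢ k s ≤ U_max), and let v̄, w̄ be the corresponding floor-discretized value functions with levels L k. If v̄ 0 s₀ ≥ w̄ 0 s₀ − 2·∑_{k=0}^{h-1} L k and w 0 s₀ ≥ U_max, then v 0 s₀ ≥ (1 − ε) · w 0 s₀. -/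
/-!
Rounding a Bellman update down to a multiple of `L k` loses at most `L k`, and a stochastic
kernel averages, so it does not amplify a uniform error. By backward induction the discretized
value of any policy is at most its true value and at least its true value minus `∑ L k`. Hence
`v ≥ v̄ ≥ w̄ - 2∑ L ≥ w - 3∑ L`, and the harmonic bound `∑_{n ≤ h} 1/n ≤ ln h + 1` gives
`3∑ L ≤ ε U_max ≤ ε w`.
-/

open Finset

section BackwardInduction

variable {S : Type*} [Fintype S] {h : ℕ} {L : ℕ → ℝ} {P : ℕ → S → S → ℝ} {u : ℕ → S → ℝ}
  {v vbar : ℕ → S → ℝ}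

theorem discretizedValue_le_value (hL : ∀ k < h, 0 < L k)
    (hP : ∀ k < h, ∀ s s' : S, 0 ≤ P k s s')
    (hv_h : ∀ s : S, v h s = 0)
    (hv : ∀ k < h, ∀ s : S, v k s = u k s + ∑ s' : S, P k s s' * v (k + 1) s')
    (hvbar_h : ∀ s : S, vbar h s = 0)
    (hvbar : ∀ k < h, ∀ s : S,
      vbar k s = (⌊(u k s + ∑ s' : S, P k s s' * vbar (k + 1) s') / L k⌋ : ℝ) * L k)
    {k : ℕ} (hk : k ≤ h) (s : S) :
    vbar k s ≤ v k s := by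
  induction hk using Nat.decreasingInduction generalizing s with
  | self => rw [hvbar_h, hv_h]
  | of_succ k hk ih =>
    have hround := Int.sub_floor_div_mul_nonneg (u k s + ∑ s' : S, P k s s' * vbar (k + 1) s')
      (hL k hk)
    have hmono : ∑ s' : S, P k s s' * vbar (k + 1) s' ≤ ∑ s' : S, P k s s' * v (k + 1) s' :=
      sum_le_sum fun s' _ => mul_le_mul_of_nonneg_left (ih s') (hP k hk s s')
    rw [hvbar k hk, hv k hk]
    linarith

theorem value_sub_sum_Ico_le_discretizedValue (hL : ∀ k < h, 0 < L k)
    (hP : ∀ k < h, ∀ s s' : S, 0 ≤ P k s s')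
    (hP_sum : ∀ k < h, ∀ s : S, ∑ s' : S, P k s s' = 1)
    (hv_h : ∀ s : S, v h s = 0)
    (hv : ∀ k < h, ∀ s : S, v k s = u k s + ∑ s' : S, P k s s' * v (k + 1) s')
    (hvbar_h : ∀ s : S, vbar h s = 0)
    (hvbar : ∀ k < h, ∀ s : S,
      vbar k s = (⌊(u k s + ∑ s' : S, P k s s' * vbar (k + 1) s') / L k⌋ : ℝ) * L k)
    {k : ℕ} (hk : k ≤ h) (s : S) :
    v k s - ∑ j ∈ Ico k h, L j ≤ vbar k s := by
  induction hk using Nat.decreasingInduction generalizing s with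
  | self => simp [hvbar_h, hv_h]
  | of_succ k hk ih =>
    set tail := ∑ j ∈ Ico (k + 1) h, L j
    have hround := Int.sub_floor_div_mul_lt (u k s + ∑ s' : S, P k s s' * vbar (k + 1) s')
      (hL k hk)
    have hmono : ∑ s' : S, P k s s' * (v (k + 1) s' - tail) ≤
        ∑ s' : S, P k s s' * vbar (k + 1) s' :=
      sum_le_sum fun s' _ => mul_le_mul_of_nonneg_left (ih s') (hP k hk s s')
    have havg : ∑ s' : S, P k s s' * (v (k + 1) s' - tail) =
        ∑ s' : S, P k s s' * v (k + 1) s' - tail := by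
      simp only [mul_sub, sum_sub_distrib, ← sum_mul, hP_sum k hk, one_mul]
    rw [hvbar k hk, hv k hk, sum_eq_sum_Ico_succ_bot hk]
    linarith

end BackwardInduction

theorem sum_range_inv_natCast_sub_le_log_add_one (n : ℕ) :
    ∑ k ∈ range n, ((n - k : ℕ) : ℝ)⁻¹ ≤ Real.log n + 1 := by
  have hreflect : ∑ k ∈ range n, ((n - k : ℕ) : ℝ)⁻¹ = harmonic n := by
    rw [harmonic, ← sum_range_reflect]
    push_cast
    refine sum_congr rfl fun k hk => ?_
    rw [show n - (n - 1 - k) = k + 1 by grind, Nat.cast_add_one]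
  rw [hreflect, add_comm]
  exact harmonic_le_one_add_log n

theorem sum_range_le_div_three_of_eq_div_log {n : ℕ} {a : ℝ} (ha : 0 ≤ a) {L : ℕ → ℝ}
    (hL : ∀ k < n, L k = a / (3 * ((n - k : ℕ) : ℝ) * (Real.log n + 1))) :
    ∑ k ∈ range n, L k ≤ a / 3 := by
  have hlog : 0 < Real.log n + 1 := by linarith [Real.log_natCast_nonneg n]
  have hL' : ∀ k ∈ range n, L k = a / (3 * (Real.log n + 1)) * ((n - k : ℕ) : ℝ)⁻¹ := by
    intro k hk
    rw [hL k (mem_range.mp hk)]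
    field_simp
  calc ∑ k ∈ range n, L k
      = a / (3 * (Real.log n + 1)) * ∑ k ∈ range n, ((n - k : ℕ) : ℝ)⁻¹ := by
        rw [sum_congr rfl hL', mul_sum]
    _ ≤ a / (3 * (Real.log n + 1)) * (Real.log n + 1) := by
        gcongr
        exact sum_range_inv_natCast_sub_le_log_add_one n
    _ = a / 3 := by field_simp

theorem fptas_disjoint_approximation_guarantee_general
    (S : Type*) [Fintype S] (h : ℕ)
    (U_max ε : ℝ) (hU : 0 < U_max) (hε : 0 < ε)
    (L : ℕ → ℝ)
    (hL : ∀ k < h,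
      L k = ε * U_max / (3 * ((h - k : ℕ) : ℝ) * (Real.log h + 1)))
    (P₁ P₂ : ℕ → S → S → ℝ) (u₁ u₂ : ℕ → S → ℝ)
    (hP₁_nonneg : ∀ k < h, ∀ s s' : S, 0 ≤ P₁ k s s')
    (hP₂_nonneg : ∀ k < h, ∀ s s' : S, 0 ≤ P₂ k s s')
    (hP₂_sum : ∀ k < h, ∀ s : S, ∑ s' : S, P₂ k s s' = 1)
    (v w vbar wbar : ℕ → S → ℝ)
    (hv_h : ∀ s : S, v h s = 0)
    (hv : ∀ k < h, ∀ s : S, v k s = u₁ k s + ∑ s' : S, P₁ k s s' * v (k + 1) s')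
    (hw_h : ∀ s : S, w h s = 0)
    (hw : ∀ k < h, ∀ s : S, w k s = u₂ k s + ∑ s' : S, P₂ k s s' * w (k + 1) s')
    (hvbar_h : ∀ s : S, vbar h s = 0)
    (hvbar : ∀ k < h, ∀ s : S,
      vbar k s =
        (⌊(u₁ k s + ∑ s' : S, P₁ k s s' * vbar (k + 1) s') / L k⌋ : ℝ) * L k)
    (hwbar_h : ∀ s : S, wbar h s = 0)
    (hwbar : ∀ k < h, ∀ s : S,
      wbar k s =
        (⌊(u₂ k s + ∑ s' : S, P₂ k s s' * wbar (k + 1) s') / L k⌋ : ℝ) * L k)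
    (s₀ : S)
    (hdom : vbar 0 s₀ ≥ wbar 0 s₀ - 2 * ∑ k ∈ Finset.range h, L k)
    (hwU : w 0 s₀ ≥ U_max) :
    v 0 s₀ ≥ (1 - ε) * w 0 s₀ := by
  have hLpos : ∀ k < h, 0 < L k := by
    intro k hk
    have hhk : (0 : ℝ) < (h - k : ℕ) := by exact_mod_cast Nat.sub_pos_of_lt hk
    rw [hL k hk]
    have := Real.log_natCast_nonneg h
    positivity
  have hv0 := discretizedValue_le_value hLpos hP₁_nonneg hv_h hv hvbar_h hvbar h.zero_le s₀
  have hw0 := value_sub_sum_Ico_le_discretizedValue hLpos hP₂_nonneg hP₂_sum hw_h hw hwbar_h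
    hwbar h.zero_le s₀
  rw [← range_eq_Ico] at hw0
  have hsum := sum_range_le_div_three_of_eq_div_log (mul_pos hε hU).le hL
  have hεw := mul_le_mul_of_nonneg_left hwU hε.le
  linarith

/-- Corollary 2: with discretization levels
`L k = ε·U_max/(3(h−k)(ln h + 1))`, if the discretized value of policy 1 at `s₀`
is at least that of policy 2 minus `2·∑_k L k`, and the true value of policy 2
is at least `U_max`, then policy 1 is a `(1 − ε)`-approximation of policy 2. -/
theorem fptas_disjoint_approximation_guarantee
    (S : Type*) [Fintype S] (h : ℕ) (hh : 1 ≤ h)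
    (U_max ε : ℝ) (hU : 0 < U_max) (hε : 0 < ε)
    (L : ℕ → ℝ)
    (hL : ∀ k < h,
      L k = ε * U_max / (3 * ((h - k : ℕ) : ℝ) * (Real.log h + 1)))
    (P₁ P₂ : ℕ → S → S → ℝ) (u₁ u₂ : ℕ → S → ℝ)
    (hP₁_nonneg : ∀ k < h, ∀ s s' : S, 0 ≤ P₁ k s s')
    (hP₁_sum : ∀ k < h, ∀ s : S, ∑ s' : S, P₁ k s s' = 1)
    (hP₂_nonneg : ∀ k < h, ∀ s s' : S, 0 ≤ P₂ k s s')
    (hP₂_sum : ∀ k < h, ∀ s : S, ∑ s' : S, P₂ k s s' = 1)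
    (hu₁ : ∀ k < h, ∀ s : S, 0 ≤ u₁ k s ∧ u₁ k s ≤ U_max)
    (hu₂ : ∀ k < h, ∀ s : S, 0 ≤ u₂ k s ∧ u₂ k s ≤ U_max)
    (v w vbar wbar : ℕ → S → ℝ)
    (hv_h : ∀ s : S, v h s = 0)
    (hv : ∀ k < h, ∀ s : S, v k s = u₁ k s + ∑ s' : S, P₁ k s s' * v (k + 1) s')
    (hw_h : ∀ s : S, w h s = 0)
    (hw : ∀ k < h, ∀ s : S, w k s = u₂ k s + ∑ s' : S, P₂ k s s' * w (k + 1) s')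
    (hvbar_h : ∀ s : S, vbar h s = 0)
    (hvbar : ∀ k < h, ∀ s : S,
      vbar k s =
        (⌊(u₁ k s + ∑ s' : S, P₁ k s s' * vbar (k + 1) s') / L k⌋ : ℝ) * L k)
    (hwbar_h : ∀ s : S, wbar h s = 0)
    (hwbar : ∀ k < h, ∀ s : S,
      wbar k s =
        (⌊(u₂ k s + ∑ s' : S, P₂ k s s' * wbar (k + 1) s') / L k⌋ : ℝ) * L k)
    (s₀ : S)
    (hdom : vbar 0 s₀ ≥ wbar 0 s₀ - 2 * ∑ k ∈ Finset.range h, L k)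
    (hwU : w 0 s₀ ≥ U_max) :
    v 0 s₀ ≥ (1 - ε) * w 0 s₀ :=
  fptas_disjoint_approximation_guarantee_general S h U_max ε hU hε L hL P₁ P₂ u₁ u₂ hP₁_nonneg
    hP₂_nonneg hP₂_sum v w vbar wbar hv_h hv hw_h hw hvbar_h hvbar hwbar_h hwbar s₀ hdom hwU
end
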